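/- arXiv:2105.00044 — 5 statements merged into one kernel-verified Lean document; each statement's English description precedes it below -/
import Mathlib

section
/- Let D be an H-colored digraph and 𝔉 an H-class partition of A(D) such that for every F∈𝔉 the subdigraph D⟨F⟩ is strongly connected and contains a vertex that is obstruction-free in D. Then for every k≥2, D has a (k,H)-kernel by walks. -/
universe u v

/-- A walk of length `n` in the digraph with arc relation `R`;
its vertices are `x 0, x 1, …, x n`. -/
def IsWalk {α : Type u} (R : α → α → Prop) (x : ℕ → α) (n : ℕ) : Prop :=
  ∀ i < n, R (x i) (x (i + 1))

/-- A (directed) path: a walk whose vertices `x 0, …, x n` are pairwise distinct. -/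
def IsPath {α : Type u} (R : α → α → Prop) (x : ℕ → α) (n : ℕ) : Prop :=
  IsWalk R x n ∧ ∀ i ≤ n, ∀ j ≤ n, x i = x j → i = j

/-- There is a directed path from `u` to `v` in the digraph with arc relation `R`. -/
def ExistsPath {α : Type u} (R : α → α → Prop) (u v : α) : Prop :=
  ∃ x n, IsPath R x n ∧ x 0 = u ∧ x n = v

/-- A cycle of length `n` in the digraph with arc relation `R`. -/
def IsCycle {α : Type u} (R : α → α → Prop) (x : ℕ → α) (n : ℕ) : Prop :=
  1 ≤ n ∧ IsWalk R x n ∧ x n = x 0 ∧ ∀ i < n, ∀ j < n, x i = x j → i = j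

/-- The digraph with vertex set `Vs` and arc relation `R` is strongly connected:
any two vertices are joined by directed paths in both directions. -/
def StronglyConnectedOn {α : Type u} (R : α → α → Prop) (Vs : Set α) : Prop :=
  ∀ u ∈ Vs, ∀ v ∈ Vs, ExistsPath R u v

/-- The digraph with vertex set `Vs` and arc relation `R` is unilateral:
any two vertices are joined by a directed path in at least one direction. -/
def UnilateralOn {α : Type u} (R : α → α → Prop) (Vs : Set α) : Prop :=
  ∀ u ∈ Vs, ∀ v ∈ Vs, ExistsPath R u v ∨ ExistsPath R v u

/-- A kernel by paths of the digraph with vertex set `Vs` and arc relation `R`: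
no directed path joins two distinct vertices of `K`, and every vertex of `Vs`
not in `K` has a directed path to a vertex of `K`. -/
def KernelByPaths {α : Type u} (R : α → α → Prop) (Vs : Set α) (K : Set α) : Prop :=
  K ⊆ Vs ∧
  (∀ u ∈ K, ∀ v ∈ K, u ≠ v → ¬ ExistsPath R u v) ∧
  (∀ u ∈ Vs, u ∉ K → ∃ v ∈ K, ExistsPath R u v)

/-- A `(k,l)`-kernel of the digraph with vertex set `Vs` and arc relation `R`:
every walk between two distinct vertices of `S` has length at least `k`, and
every vertex not in `S` has a walk of length at most `l` to a vertex of `S`. -/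
def klKernel {α : Type u} (R : α → α → Prop) (Vs : Set α) (k l : ℕ) (S : Set α) : Prop :=
  S ⊆ Vs ∧
  (∀ u ∈ S, ∀ v ∈ S, u ≠ v → ∀ x n, IsWalk R x n → x 0 = u → x n = v → k ≤ n) ∧
  (∀ u ∈ Vs, u ∉ S → ∃ v ∈ S, ∃ x n, IsWalk R x n ∧ x 0 = u ∧ x n = v ∧ n ≤ l)

/-- An independent set of the digraph with vertex set `Vs` and arc relation `R`:
there is no arc between two distinct vertices of `S`. -/
def IndependentOn {α : Type u} (R : α → α → Prop) (Vs : Set α) (S : Set α) : Prop :=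
  S ⊆ Vs ∧ ∀ u ∈ S, ∀ v ∈ S, u ≠ v → ¬ R u v

/-- An `l`-absorbent set of the digraph with vertex set `Vs` and arc relation `R`. -/
def lAbsorbentOn {α : Type u} (R : α → α → Prop) (Vs : Set α) (l : ℕ) (S : Set α) : Prop :=
  ∀ u ∈ Vs, u ∉ S → ∃ v ∈ S, ∃ x n, IsWalk R x n ∧ x 0 = u ∧ x n = v ∧ n ≤ l

section HColored

variable {V : Type u} {C : Type v}

/-- The arc relation of the subdigraph arc-induced by a set `F` of arcs. -/
def memRel (F : Set (V × V)) : V → V → Prop := fun a b => (a, b) ∈ F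

/-- The vertex set of the subdigraph `D⟨F⟩` arc-induced by a set `F` of arcs. -/
def classVerts (F : Set (V × V)) : Set V := {a | ∃ b, (a, b) ∈ F ∨ (b, a) ∈ F}

/-- The set of obstruction indices of the open walk `x 0, …, x n` in the
`H`-colored digraph with coloring `ρ`, where `HA` is the arc relation of `H`. -/
def obstructions (HA : C → C → Prop) (ρ : V → V → C) (x : ℕ → V) (n : ℕ) : Set ℕ :=
  {i | 1 ≤ i ∧ i < n ∧ ¬ HA (ρ (x (i - 1)) (x i)) (ρ (x i) (x (i + 1)))}

/-- The `H`-length of the open walk `x 0, …, x n`: the number of obstructions plus one. -/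
noncomputable def hLength (HA : C → C → Prop) (ρ : V → V → C) (x : ℕ → V) (n : ℕ) : ℕ :=
  (obstructions HA ρ x n).ncard + 1

/-- `S` is `(k,H)`-independent by walks: every walk between two distinct
vertices of `S` has `H`-length at least `k`. -/
def kHIndependentByWalks (DA : V → V → Prop) (HA : C → C → Prop) (ρ : V → V → C)
    (k : ℕ) (S : Set V) : Prop :=
  ∀ u ∈ S, ∀ v ∈ S, u ≠ v →
    ∀ x n, IsWalk DA x n → x 0 = u → x n = v → k ≤ hLength HA ρ x n

/-- `S` is `(l,H)`-absorbent by walks: every vertex not in `S` has a walk to a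
vertex of `S` of `H`-length at most `l`. -/
def lHAbsorbentByWalks (DA : V → V → Prop) (HA : C → C → Prop) (ρ : V → V → C)
    (l : ℕ) (S : Set V) : Prop :=
  ∀ u, u ∉ S → ∃ v ∈ S, ∃ x n, IsWalk DA x n ∧ x 0 = u ∧ x n = v ∧ hLength HA ρ x n ≤ l

/-- A `(k,l,H)`-kernel by walks. -/
def klHKernelByWalks (DA : V → V → Prop) (HA : C → C → Prop) (ρ : V → V → C)
    (k l : ℕ) (S : Set V) : Prop :=
  kHIndependentByWalks DA HA ρ k S ∧ lHAbsorbentByWalks DA HA ρ l S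

/-- `𝔉` is an `H`-class partition of the arc set of `D`: it is a partition of the
arc set, and two consecutive arcs form an `H`-arc of colors iff they lie in a
common class. -/
def IsHClassPartition (DA : V → V → Prop) (HA : C → C → Prop) (ρ : V → V → C)
    (𝔉 : Set (Set (V × V))) : Prop :=
  (∀ F ∈ 𝔉, F.Nonempty ∧ ∀ p ∈ F, DA p.1 p.2) ∧
  (∀ u v : V, DA u v → ∃! F, F ∈ 𝔉 ∧ (u, v) ∈ F) ∧
  (∀ u v w : V, DA u v → DA v w →
    (HA (ρ u v) (ρ v w) ↔ ∃ F ∈ 𝔉, (u, v) ∈ F ∧ (v, w) ∈ F))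

/-- There exist arcs `(u,v) ∈ F` and `(v,w) ∈ G`. -/
def classArc (F G : Set (V × V)) : Prop := ∃ u v w : V, (u, v) ∈ F ∧ (v, w) ∈ G

/-- The arc relation of the `H`-class digraph `C_𝔉(D)` (whose vertex set is `𝔉`). -/
def CRel (𝔉 : Set (Set (V × V))) : Set (V × V) → Set (V × V) → Prop :=
  fun F G => F ∈ 𝔉 ∧ G ∈ 𝔉 ∧ classArc F G

/-- `𝔉` is walk-preservative: for every arc `(F,G)` of `C_𝔉(D)` and every vertex
`z` of `D⟨F⟩` there is a directed path in `D⟨F⟩` from `z` to some vertex of `D⟨G⟩`. -/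
def WalkPreservative (𝔉 : Set (Set (V × V))) : Prop :=
  ∀ F ∈ 𝔉, ∀ G ∈ 𝔉, classArc F G → ∀ z ∈ classVerts F,
    ∃ w ∈ classVerts G, ExistsPath (memRel F) z w

/-- `N⁺(𝒮)`: the classes outside `𝒮` receiving an arc of `C_𝔉(D)` from `𝒮`. -/
def outNbhd (𝔉 𝒮 : Set (Set (V × V))) : Set (Set (V × V)) :=
  {G | G ∈ 𝔉 ∧ G ∉ 𝒮 ∧ ∃ F ∈ 𝒮, classArc F G}

/-- `N⁻_𝔉(x)`: the classes containing an arc entering `x`. -/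
def inClasses (𝔉 : Set (Set (V × V))) (x : V) : Set (Set (V × V)) :=
  {F | F ∈ 𝔉 ∧ ∃ u, (u, x) ∈ F}

/-- `N⁺_𝔉(x)`: the classes containing an arc leaving `x`. -/
def outClasses (𝔉 : Set (Set (V × V))) (x : V) : Set (Set (V × V)) :=
  {F | F ∈ 𝔉 ∧ ∃ v, (x, v) ∈ F}

/-- `N_𝔉(x) = N⁻_𝔉(x) ∪ N⁺_𝔉(x)`. -/
def nbhdClasses (𝔉 : Set (Set (V × V))) (x : V) : Set (Set (V × V)) :=
  inClasses 𝔉 x ∪ outClasses 𝔉 x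

/-- `x` is obstruction-free in `D`: every arc entering `x` followed by every arc
leaving `x` is an `H`-arc of colors. -/
def ObstructionFree (DA : V → V → Prop) (HA : C → C → Prop) (ρ : V → V → C) (x : V) : Prop :=
  ∀ u w, DA u x → DA x w → HA (ρ u x) (ρ x w)

/-- `C_𝔉(D)` has no sinks: every class has an out-arc to a different class. -/
def CNoSinks (𝔉 : Set (Set (V × V))) : Prop :=
  ∀ F ∈ 𝔉, ∃ G ∈ 𝔉, G ≠ F ∧ classArc F G

/-- The (loopless) subdigraph `D⟨F⟩` has no sinks. -/
def NoSinksIn (F : Set (V × V)) : Prop :=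
  ∀ x ∈ classVerts F, ∃ y, (x, y) ∈ F

end HColored

/-!
Two consecutive arcs are `H`-compatible exactly when they lie in a common class, so the
obstructions of a walk are its changes of class: a walk of `H`-length `j + 1` in `D` projects to a
walk of length at most `j` in the class digraph `C_𝔉(D)`, and, each `D⟨F⟩` being strongly
connected, a walk of length `j` in `C_𝔉(D)` lifts to a walk of `H`-length at most `j + 1` between
any two vertices of its end classes. Strong connectivity also makes `C_𝔉(D)` symmetric, so a
maximal set `M` of classes pairwise at walk-distance at least `k - 1` reaches every class within
distance `k - 2`. All arcs at an obstruction-free vertex of `D⟨F⟩` lie in `F`; picking one such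
vertex in each class of `M` and adding the isolated vertices of `D` gives the `(k,H)`-kernel.
-/

section Walks

variable {α : Type*} {R : α → α → Prop} {x y : ℕ → α} {n m : ℕ}

def walkAppend (x y : ℕ → α) (n : ℕ) : ℕ → α := fun i => if i ≤ n then x i else y (i - n)

def arcWalk (a b : α) : ℕ → α := fun i => if i = 0 then a else b

lemma walkAppend_of_le {i : ℕ} (h : i ≤ n) : walkAppend x y n i = x i := if_pos h

lemma walkAppend_of_ge {i : ℕ} (hxy : x n = y 0) (h : n ≤ i) :
    walkAppend x y n i = y (i - n) := by
  unfold walkAppend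
  split_ifs with h'
  · rw [show i = n by omega, hxy, Nat.sub_self]
  · rfl

lemma IsWalk.mono (hx : IsWalk R x n) (h : m ≤ n) : IsWalk R x m :=
  fun i hi => hx i (by omega)

lemma IsWalk.mono_rel {S : α → α → Prop} (hRS : ∀ a b, R a b → S a b) (hx : IsWalk R x n) :
    IsWalk S x n :=
  fun i hi => hRS _ _ (hx i hi)

lemma IsWalk.append (hx : IsWalk R x n) (hy : IsWalk R y m) (hxy : x n = y 0) :
    IsWalk R (walkAppend x y n) (n + m) := by
  intro i hi
  rcases Nat.lt_or_ge i n with h | h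
  · rw [walkAppend_of_le h.le, walkAppend_of_le h]
    exact hx i h
  · rw [walkAppend_of_ge hxy h, walkAppend_of_ge hxy (by omega), Nat.sub_add_comm h]
    exact hy _ (by omega)

lemma IsWalk.reverse (hR : ∀ a b, R a b → R b a) (hx : IsWalk R x n) :
    IsWalk R (fun i => x (n - i)) n := by
  intro i hi
  have := hx (n - (i + 1)) (by omega)
  rw [show n - (i + 1) + 1 = n - i by omega] at this
  exact hR _ _ this

lemma isWalk_arcWalk {a b : α} (h : R a b) : IsWalk R (arcWalk a b) 1 := by
  intro i hi
  obtain rfl : i = 0 := by omega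
  exact h

end Walks

section HLength

variable {V : Type u} {C : Type v} {HA : C → C → Prop} {ρ : V → V → C} {x y : ℕ → V} {n m : ℕ}

lemma obstructions_finite : (obstructions HA ρ x n).Finite :=
  (Set.finite_Iio n).subset fun _ hi => hi.2.1

lemma obstructions_mono (h : n ≤ m) : obstructions HA ρ x n ⊆ obstructions HA ρ x m :=
  fun _ hi => ⟨hi.1, by have := hi.2.1; omega, hi.2.2⟩

lemma one_le_hLength : 1 ≤ hLength HA ρ x n := Nat.le_add_left 1 _

lemma hLength_mono (h : n ≤ m) : hLength HA ρ x n ≤ hLength HA ρ x m :=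
  Nat.add_le_add_right (Set.ncard_le_ncard (obstructions_mono h) obstructions_finite) 1

lemma hLength_lt_succ (h : n ∈ obstructions HA ρ x (n + 1)) :
    hLength HA ρ x n < hLength HA ρ x (n + 1) := by
  refine Nat.add_lt_add_right (Set.ncard_lt_ncard ?_ obstructions_finite) 1
  exact Set.ssubset_iff_of_subset (obstructions_mono n.le_succ) |>.2
    ⟨n, h, fun hn => lt_irrefl n hn.2.1⟩

lemma hLength_one : hLength HA ρ x 1 = 1 := by
  suffices obstructions HA ρ x 1 = ∅ by rw [hLength, this, Set.ncard_empty]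
  exact Set.eq_empty_iff_forall_notMem.2 fun i ⟨hi1, hi, _⟩ => by omega

lemma obstructions_walkAppend_subset (hxy : x n = y 0) :
    obstructions HA ρ (walkAppend x y n) (n + m) ⊆
      {i | i = n ∧ ¬ HA (ρ (x (n - 1)) (x n)) (ρ (y 0) (y 1))} ∪
        (obstructions HA ρ x n ∪ (· + n) '' obstructions HA ρ y m) := by
  rintro i ⟨hi1, hi2, hobs⟩
  rcases lt_trichotomy i n with h | rfl | h
  · rw [walkAppend_of_le (by omega), walkAppend_of_le h.le, walkAppend_of_le h] at hobs
    exact Or.inr (Or.inl ⟨hi1, h, hobs⟩)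
  · rw [walkAppend_of_le (by omega), walkAppend_of_le le_rfl, walkAppend_of_ge hxy (by omega),
      Nat.add_sub_cancel_left] at hobs
    exact Or.inl ⟨rfl, hxy ▸ hobs⟩
  · rw [walkAppend_of_ge hxy (by omega), walkAppend_of_ge hxy h.le,
      walkAppend_of_ge hxy (by omega)] at hobs
    refine Or.inr (Or.inr ⟨i - n, ⟨by omega, by omega, ?_⟩, show i - n + n = i by omega⟩)
    rwa [show i - 1 - n = i - n - 1 by omega, show i + 1 - n = i - n + 1 by omega] at hobs

lemma ncard_obstructions_union_image_le :
    (obstructions HA ρ x n ∪ (· + n) '' obstructions HA ρ y m).ncard ≤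
      (obstructions HA ρ x n).ncard + (obstructions HA ρ y m).ncard :=
  (Set.ncard_union_le _ _).trans (Nat.add_le_add_left (Set.ncard_image_le obstructions_finite) _)

lemma hLength_walkAppend_le (hxy : x n = y 0) :
    hLength HA ρ (walkAppend x y n) (n + m) ≤ hLength HA ρ x n + hLength HA ρ y m := by
  have hsub : obstructions HA ρ (walkAppend x y n) (n + m) ⊆
      insert n (obstructions HA ρ x n ∪ (· + n) '' obstructions HA ρ y m) := by
    intro i hi
    rcases obstructions_walkAppend_subset hxy hi with h | h
    · exact Or.inl h.1
    · exact Or.inr h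
  have := (Set.ncard_le_ncard hsub ((obstructions_finite.union
    (obstructions_finite.image _)).insert n)).trans <| (Set.ncard_insert_le _ _).trans
      (Nat.add_le_add_right ncard_obstructions_union_image_le 1)
  unfold hLength
  omega

lemma hLength_walkAppend_lt (hxy : x n = y 0)
    (hjoin : HA (ρ (x (n - 1)) (x n)) (ρ (y 0) (y 1))) :
    hLength HA ρ (walkAppend x y n) (n + m) < hLength HA ρ x n + hLength HA ρ y m := by
  have hsub : obstructions HA ρ (walkAppend x y n) (n + m) ⊆
      obstructions HA ρ x n ∪ (· + n) '' obstructions HA ρ y m := by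
    intro i hi
    rcases obstructions_walkAppend_subset hxy hi with h | h
    · exact absurd hjoin h.2
    · exact h
  have := (Set.ncard_le_ncard hsub (obstructions_finite.union
    (obstructions_finite.image _))).trans ncard_obstructions_union_image_le
  unfold hLength
  omega

end HLength

section StronglyConnectedArcSet

variable {V : Type u} {F : Set (V × V)}

lemma exists_isWalk_pos_of_stronglyConnectedOn (hloop : ∀ a, (a, a) ∉ F)
    (hF : StronglyConnectedOn (memRel F) (classVerts F)) {u v : V}
    (hu : u ∈ classVerts F) (hv : v ∈ classVerts F) :
    ∃ x n, 0 < n ∧ IsWalk (memRel F) x n ∧ x 0 = u ∧ x n = v := by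
  obtain ⟨b, hub⟩ := id hu
  have hbu : b ≠ u := by
    rintro rfl
    exact hub.elim (hloop b) (hloop b)
  have hb : b ∈ classVerts F := ⟨u, hub.symm⟩
  obtain ⟨x, n, ⟨hx, -⟩, hx0, hxn⟩ := hF u hu b hb
  obtain ⟨y, m, ⟨hy, -⟩, hy0, hym⟩ := hF b hb v hv
  have hxy : x n = y 0 := hxn.trans hy0.symm
  refine ⟨walkAppend x y n, n + m, ?_, hx.append hy hxy, ?_, ?_⟩
  · refine Nat.add_pos_left (Nat.pos_of_ne_zero ?_) m
    rintro rfl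
    exact hbu (hxn.symm.trans hx0)
  · rw [walkAppend_of_le n.zero_le, hx0]
  · rw [walkAppend_of_ge hxy (Nat.le_add_right n m), Nat.add_sub_cancel_left, hym]

lemma exists_pred_mem_of_stronglyConnectedOn (hloop : ∀ a, (a, a) ∉ F)
    (hF : StronglyConnectedOn (memRel F) (classVerts F)) {v : V} (hv : v ∈ classVerts F) :
    ∃ s, (s, v) ∈ F := by
  obtain ⟨x, n, hn, hx, -, hxn⟩ := exists_isWalk_pos_of_stronglyConnectedOn hloop hF hv hv
  refine ⟨x (n - 1), ?_⟩
  have := hx (n - 1) (by omega)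
  rwa [Nat.sub_add_cancel hn, hxn] at this

lemma noSinksIn_of_stronglyConnectedOn (hloop : ∀ a, (a, a) ∉ F)
    (hF : StronglyConnectedOn (memRel F) (classVerts F)) : NoSinksIn F := by
  intro v hv
  obtain ⟨x, n, hn, hx, hx0, -⟩ := exists_isWalk_pos_of_stronglyConnectedOn hloop hF hv hv
  exact ⟨x 1, hx0 ▸ hx 0 hn⟩

end StronglyConnectedArcSet

namespace IsHClassPartition

variable {V : Type u} {C : Type v} {DA : V → V → Prop} {HA : C → C → Prop} {ρ : V → V → C}
  {𝔉 : Set (Set (V × V))} {F G : Set (V × V)} {x : ℕ → V} {n : ℕ} {s t u v w z : V}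

lemma arc_of_mem (hpart : IsHClassPartition DA HA ρ 𝔉) (hF : F ∈ 𝔉) (h : (u, v) ∈ F) :
    DA u v :=
  (hpart.1 F hF).2 _ h

lemma loopless_of_mem (hpart : IsHClassPartition DA HA ρ 𝔉) (hloop : ∀ a, ¬ DA a a)
    (hF : F ∈ 𝔉) : ∀ a, (a, a) ∉ F :=
  fun a ha => hloop a (hpart.arc_of_mem hF ha)

lemma exists_mem (hpart : IsHClassPartition DA HA ρ 𝔉) (h : DA u v) : ∃ F ∈ 𝔉, (u, v) ∈ F :=
  (hpart.2.1 u v h).exists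

lemma eq_of_mem (hpart : IsHClassPartition DA HA ρ 𝔉) (hF : F ∈ 𝔉) (hG : G ∈ 𝔉)
    (hFp : (u, v) ∈ F) (hGp : (u, v) ∈ G) : F = G :=
  (hpart.2.1 u v (hpart.arc_of_mem hF hFp)).unique ⟨hF, hFp⟩ ⟨hG, hGp⟩

lemma compatible_iff_eq (hpart : IsHClassPartition DA HA ρ 𝔉) (hF : F ∈ 𝔉) (hG : G ∈ 𝔉)
    (huv : (u, v) ∈ F) (hvw : (v, w) ∈ G) : HA (ρ u v) (ρ v w) ↔ F = G := by
  rw [hpart.2.2 u v w (hpart.arc_of_mem hF huv) (hpart.arc_of_mem hG hvw)]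
  constructor
  · rintro ⟨F', hF', huv', hvw'⟩
    exact (hpart.eq_of_mem hF hF' huv huv').trans (hpart.eq_of_mem hF' hG hvw' hvw)
  · rintro rfl
    exact ⟨F, hF, huv, hvw⟩

lemma hLength_eq_one (hpart : IsHClassPartition DA HA ρ 𝔉) (hF : F ∈ 𝔉)
    (hx : IsWalk (memRel F) x n) : hLength HA ρ x n = 1 := by
  suffices obstructions HA ρ x n = ∅ by rw [hLength, this, Set.ncard_empty]
  refine Set.eq_empty_iff_forall_notMem.2 fun i ⟨hi1, hi, hobs⟩ => hobs ?_
  have hprev := hx (i - 1) (by omega)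
  rw [Nat.sub_add_cancel hi1] at hprev
  exact (hpart.compatible_iff_eq hF hF hprev (hx i hi)).2 rfl

lemma mem_of_obstructionFree (hpart : IsHClassPartition DA HA ρ 𝔉) (hloop : ∀ a, ¬ DA a a)
    (hF : F ∈ 𝔉) (hstrong : StronglyConnectedOn (memRel F) (classVerts F))
    (hzF : z ∈ classVerts F) (hz : ObstructionFree DA HA ρ z) :
    (∀ w, DA z w → (z, w) ∈ F) ∧ (∀ u, DA u z → (u, z) ∈ F) := by
  obtain ⟨s, hsz⟩ := exists_pred_mem_of_stronglyConnectedOn (hpart.loopless_of_mem hloop hF)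
    hstrong hzF
  obtain ⟨t, hzt⟩ := noSinksIn_of_stronglyConnectedOn (hpart.loopless_of_mem hloop hF) hstrong z hzF
  constructor
  · intro w hw
    obtain ⟨G, hG, hzw⟩ := hpart.exists_mem hw
    rwa [(hpart.compatible_iff_eq hF hG hsz hzw).1 (hz s w (hpart.arc_of_mem hF hsz) hw)]
  · intro u hu
    obtain ⟨G, hG, huz⟩ := hpart.exists_mem hu
    rwa [← (hpart.compatible_iff_eq hG hF huz hzt).1 (hz u t hu (hpart.arc_of_mem hF hzt))]

lemma cRel_symm (hpart : IsHClassPartition DA HA ρ 𝔉) (hloop : ∀ a, ¬ DA a a)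
    (hstrong : ∀ F ∈ 𝔉, StronglyConnectedOn (memRel F) (classVerts F)) :
    ∀ F G, CRel 𝔉 F G → CRel 𝔉 G F := by
  rintro F G ⟨hF, hG, a, v, w, hav, hvw⟩
  obtain ⟨t, hvt⟩ := noSinksIn_of_stronglyConnectedOn (hpart.loopless_of_mem hloop hF)
    (hstrong F hF) v ⟨a, Or.inr hav⟩
  obtain ⟨s, hsv⟩ := exists_pred_mem_of_stronglyConnectedOn (hpart.loopless_of_mem hloop hG)
    (hstrong G hG) ⟨w, Or.inl hvw⟩
  exact ⟨hG, hF, s, v, t, hsv, hvt⟩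

lemma exists_cRel_walk_of_isWalk (hpart : IsHClassPartition DA HA ρ 𝔉) (hF : F ∈ 𝔉) (hG : G ∈ 𝔉)
    (hx : IsWalk DA x (n + 1)) (hfirst : (x 0, x 1) ∈ F) (hlast : (x n, x (n + 1)) ∈ G) :
    ∃ c m, IsWalk (CRel 𝔉) c m ∧ c 0 = F ∧ c m = G ∧ m + 1 ≤ hLength HA ρ x (n + 1) := by
  induction n generalizing G with
  | zero =>
    exact ⟨fun _ => F, 0, fun i hi => absurd hi i.not_lt_zero, rfl,
      hpart.eq_of_mem hF hG hfirst hlast, one_le_hLength⟩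
  | succ n ih =>
    obtain ⟨F', hF', hprev⟩ := hpart.exists_mem (hx n (by omega))
    obtain ⟨c, m, hc, hc0, hcm, hm⟩ := ih hF' (hx.mono (n + 1).le_succ) hprev
    by_cases hF'G : F' = G
    · exact ⟨c, m, hc, hc0, hcm.trans hF'G, hm.trans (hLength_mono (n + 1).le_succ)⟩
    have hobs : n + 1 ∈ obstructions HA ρ x (n + 2) :=
      ⟨by omega, by omega, fun h => hF'G ((hpart.compatible_iff_eq hF' hG hprev hlast).1 h)⟩
    have hstep : IsWalk (CRel 𝔉) (arcWalk F' G) 1 :=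
      isWalk_arcWalk ⟨hF', hG, x n, x (n + 1), x (n + 2), hprev, hlast⟩
    refine ⟨walkAppend c (arcWalk F' G) m, m + 1, hc.append hstep hcm, ?_, ?_,
      hm.trans_lt (hLength_lt_succ hobs)⟩
    · rw [walkAppend_of_le m.zero_le, hc0]
    · rw [walkAppend_of_ge hcm (Nat.le_add_right m 1), Nat.add_sub_cancel_left]
      rfl

lemma exists_isWalk_of_cRel_walk (hpart : IsHClassPartition DA HA ρ 𝔉) (hloop : ∀ a, ¬ DA a a)
    (hstrong : ∀ F ∈ 𝔉, StronglyConnectedOn (memRel F) (classVerts F)) {c : ℕ → Set (V × V)}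
    {m : ℕ} (hc : IsWalk (CRel 𝔉) c m) (hc0 : c 0 ∈ 𝔉) (hu : u ∈ classVerts (c 0))
    (hz : z ∈ classVerts (c m)) :
    ∃ x n, 0 < n ∧ IsWalk DA x n ∧ x 0 = u ∧ x n = z ∧ (x 0, x 1) ∈ c 0 ∧
      hLength HA ρ x n ≤ m + 1 := by
  induction m generalizing c u with
  | zero =>
    obtain ⟨x, n, hn, hx, hx0, hxn⟩ := exists_isWalk_pos_of_stronglyConnectedOn
      (hpart.loopless_of_mem hloop hc0) (hstrong _ hc0) hu hz
    exact ⟨x, n, hn, hx.mono_rel fun _ _ => hpart.arc_of_mem hc0, hx0, hxn, hx0 ▸ hx 0 hn,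
      (hpart.hLength_eq_one hc0 hx).le⟩
  | succ m ih =>
    obtain ⟨-, hc1, a, v, w, hav, hvw⟩ := hc 0 m.succ_pos
    obtain ⟨q, nq, hnq, hq, hq0, hqn⟩ := exists_isWalk_pos_of_stronglyConnectedOn
      (hpart.loopless_of_mem hloop hc0) (hstrong _ hc0) hu ⟨a, Or.inr hav⟩
    obtain ⟨r, nr, -, hr, rfl, hrn, hrfirst, hrlen⟩ := ih (c := fun i => c (i + 1))
      (fun i hi => hc (i + 1) (by omega)) hc1 ⟨v, Or.inr hvw⟩ hz
    -- prepending `(v, r 0)` to `r` costs nothing: it lies in the class of the first arc of `r`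
    have hvwr : arcWalk v (r 0) 1 = r 0 := rfl
    have hr'n : walkAppend (arcWalk v (r 0)) r 1 (1 + nr) = z := by
      rw [walkAppend_of_ge hvwr (Nat.le_add_right 1 nr), Nat.add_sub_cancel_left, hrn]
    have hr' : IsWalk DA (walkAppend (arcWalk v (r 0)) r 1) (1 + nr) :=
      (isWalk_arcWalk (hpart.arc_of_mem hc1 hvw)).append hr hvwr
    have hr'len : hLength HA ρ (walkAppend (arcWalk v (r 0)) r 1) (1 + nr) ≤ m + 1 := by
      have hjoin : HA (ρ v (r 0)) (ρ (r 0) (r 1)) :=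
        (hpart.compatible_iff_eq hc1 hc1 hvw hrfirst).2 rfl
      have := hLength_walkAppend_lt (HA := HA) (ρ := ρ) (m := nr) hvwr hjoin
      rw [hLength_one] at this
      omega
    have hqr' : q nq = walkAppend (arcWalk v (r 0)) r 1 0 := hqn
    refine ⟨walkAppend q _ nq, nq + (1 + nr), by omega, hq.mono_rel (fun _ _ =>
      hpart.arc_of_mem hc0) |>.append hr' hqr', ?_, ?_, ?_, ?_⟩
    · rw [walkAppend_of_le nq.zero_le, hq0]
    · rw [walkAppend_of_ge hqr' (Nat.le_add_right _ _), Nat.add_sub_cancel_left, hr'n]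
    · rw [walkAppend_of_le nq.zero_le, walkAppend_of_le hnq]
      exact hq 0 hnq
    · have := hLength_walkAppend_le (HA := HA) (ρ := ρ) (m := 1 + nr) hqr'
      rw [hpart.hLength_eq_one hc0 hq] at this
      omega

end IsHClassPartition

section SymmetricKernel

variable {β : Type*}

lemma exists_maximal_pairwise_subset (r : β → β → Prop) (s : Set β) :
    ∃ M, Maximal (fun T => T ⊆ s ∧ T.Pairwise r) M :=
  zorn_subset _ fun ch hch hchain =>
    ⟨⋃₀ ch, ⟨Set.sUnion_subset fun _ hT => (hch hT).1,
      hchain.pairwise_sUnion.2 fun _ hT => (hch hT).2⟩, fun _ hT => Set.subset_sUnion_of_mem hT⟩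

-- A vertex that is not absorbed could be added to a maximal such set.
lemma exists_klKernel_of_symm {R : β → β → Prop} (hR : ∀ a b, R a b → R b a) (Vs : Set β)
    (k : ℕ) : ∃ S, klKernel R Vs k (k - 1) S := by
  obtain ⟨S, ⟨hSVs, hSind⟩, hmax⟩ := exists_maximal_pairwise_subset
    (fun a b => ∀ c m, IsWalk R c m → c 0 = a → c m = b → k ≤ m) Vs
  refine ⟨S, hSVs, fun a ha b hb hab => hSind ha hb hab, fun a ha haS => ?_⟩
  by_contra! hfar
  refine haS (hmax ⟨Set.insert_subset ha hSVs, hSind.insert fun b hb _ => ⟨?_, ?_⟩⟩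
    (Set.subset_insert a S) (Set.mem_insert a S))
  · rintro c m hc rfl rfl
    have := hfar _ hb c m hc rfl rfl
    omega
  · rintro c m hc rfl rfl
    have := hfar _ hb _ m (hc.reverse hR) (by simp) (by simp)
    omega

end SymmetricKernel

section Kernel

variable {V : Type u} {C : Type v} {DA : V → V → Prop} {HA : C → C → Prop} {ρ : V → V → C}
  {𝔉 : Set (Set (V × V))} {M : Set (Set (V × V))} {z : Set (V × V) → V}

def isolatedVerts (DA : V → V → Prop) : Set V := {v | ∀ w, ¬ DA v w ∧ ¬ DA w v}

lemma kHIndependentByWalks_isolatedVerts_union (hpart : IsHClassPartition DA HA ρ 𝔉)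
    (hloop : ∀ a, ¬ DA a a) (hstrong : ∀ F ∈ 𝔉, StronglyConnectedOn (memRel F) (classVerts F))
    (hM𝔉 : M ⊆ 𝔉) {k : ℕ}
    (hMind : ∀ F ∈ M, ∀ G ∈ M, F ≠ G → ∀ c m, IsWalk (CRel 𝔉) c m → c 0 = F → c m = G → k ≤ m)
    (hz : ∀ F ∈ M, z F ∈ classVerts F) (hzfree : ∀ F ∈ M, ObstructionFree DA HA ρ (z F)) :
    kHIndependentByWalks DA HA ρ (k + 1) (isolatedVerts DA ∪ z '' M) := by
  rintro u hu v hv huv x n hx rfl rfl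
  obtain ⟨n, rfl⟩ : ∃ n', n = n' + 1 := Nat.exists_eq_succ_of_ne_zero (by rintro rfl; exact huv rfl)
  obtain ⟨F, hF, hFx⟩ := hu.resolve_left fun h => (h (x 1)).1 (hx 0 n.succ_pos)
  obtain ⟨G, hG, hGx⟩ := hv.resolve_left fun h => (h (x n)).2 (hx n n.lt_succ_self)
  have hfirst : (x 0, x 1) ∈ F := by
    have h0 := hx 0 n.succ_pos
    rw [← hFx] at h0 ⊢
    exact (hpart.mem_of_obstructionFree hloop (hM𝔉 hF) (hstrong F (hM𝔉 hF)) (hz F hF)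
      (hzfree F hF)).1 _ h0
  have hlast : (x n, x (n + 1)) ∈ G := by
    have hn := hx n n.lt_succ_self
    rw [← hGx] at hn ⊢
    exact (hpart.mem_of_obstructionFree hloop (hM𝔉 hG) (hstrong G (hM𝔉 hG)) (hz G hG)
      (hzfree G hG)).2 _ hn
  obtain ⟨c, m, hc, hc0, hcm, hm⟩ :=
    hpart.exists_cRel_walk_of_isWalk (hM𝔉 hF) (hM𝔉 hG) hx hfirst hlast
  have := hMind F hF G hG (by rintro rfl; exact huv (hFx.symm.trans hGx)) c m hc hc0 hcm
  omega

lemma lHAbsorbentByWalks_isolatedVerts_union (hpart : IsHClassPartition DA HA ρ 𝔉)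
    (hloop : ∀ a, ¬ DA a a) (hstrong : ∀ F ∈ 𝔉, StronglyConnectedOn (memRel F) (classVerts F))
    {l : ℕ} (hMabs : lAbsorbentOn (CRel 𝔉) 𝔉 l M) (hz : ∀ F ∈ M, z F ∈ classVerts F) :
    lHAbsorbentByWalks DA HA ρ (l + 1) (isolatedVerts DA ∪ z '' M) := by
  intro u hu
  obtain ⟨F, hF, huF⟩ : ∃ F ∈ 𝔉, u ∈ classVerts F := by
    obtain ⟨w, huw⟩ : ∃ w, DA u w ∨ DA w u := by
      by_contra! h
      exact hu (Or.inl h)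
    rcases huw with huw | hwu
    · obtain ⟨F, hF, huwF⟩ := hpart.exists_mem huw
      exact ⟨F, hF, w, Or.inl huwF⟩
    · obtain ⟨F, hF, hwuF⟩ := hpart.exists_mem hwu
      exact ⟨F, hF, w, Or.inr hwuF⟩
  obtain ⟨G, hG, c, m, hc, rfl, rfl, hm⟩ :
      ∃ G ∈ M, ∃ c m, IsWalk (CRel 𝔉) c m ∧ c 0 = F ∧ c m = G ∧ m ≤ l := by
    by_cases hFM : F ∈ M
    · exact ⟨F, hFM, fun _ => F, 0, fun i hi => absurd hi i.not_lt_zero, rfl, rfl, l.zero_le⟩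
    · exact hMabs F hF hFM
  obtain ⟨x, n, -, hx, hx0, hxn, -, hlen⟩ :=
    hpart.exists_isWalk_of_cRel_walk hloop hstrong hc hF huF (hz _ hG)
  exact ⟨z (c m), Or.inr ⟨c m, hG, rfl⟩, x, n, hx, hx0, hxn, hlen.trans (by omega)⟩

end Kernel

/-- Theorem `teostrong2`. Let `D` be an `H`-colored digraph and `𝔉`
an `H`-class partition of `A(D)` such that for every `F ∈ 𝔉` the subdigraph `D⟨F⟩` is
strongly connected and contains an obstruction-free vertex of `D`. Then for every
`k ≥ 2`, `D` has a `(k,H)`-kernel by walks, i.e. a `(k,k-1,H)`-kernel by walks. -/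
theorem stmt0 {V : Type u} {C : Type v}
    (DA : V → V → Prop) (hloopless : ∀ a : V, ¬ DA a a)
    (HA : C → C → Prop) (ρ : V → V → C)
    (𝔉 : Set (Set (V × V)))
    (hpart : IsHClassPartition DA HA ρ 𝔉)
    (hstrong : ∀ F ∈ 𝔉, StronglyConnectedOn (memRel F) (classVerts F))
    (hfree : ∀ F ∈ 𝔉, ∃ x ∈ classVerts F, ObstructionFree DA HA ρ x) :
    ∀ k : ℕ, 2 ≤ k → ∃ S : Set V, klHKernelByWalks DA HA ρ k (k - 1) S := by
  intro k hk
  rcases isEmpty_or_nonempty V with hV | hV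
  · exact ⟨∅, fun u => isEmptyElim u, fun u => isEmptyElim u⟩
  choose! z hz hzfree using hfree
  obtain ⟨M, hM𝔉, hMind, hMabs⟩ :=
    exists_klKernel_of_symm (hpart.cRel_symm hloopless hstrong) 𝔉 (k - 1)
  refine ⟨isolatedVerts DA ∪ z '' M, ?_, ?_⟩
  · have := kHIndependentByWalks_isolatedVerts_union hpart hloopless hstrong hM𝔉 hMind
      (fun F hF => hz F (hM𝔉 hF)) (fun F hF => hzfree F (hM𝔉 hF))
    rwa [Nat.sub_add_cancel (by omega)] at this
  · have := lHAbsorbentByWalks_isolatedVerts_union hpart hloopless hstrong hMabs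
      (fun F hF => hz F (hM𝔉 hF))
    rwa [Nat.sub_add_cancel (by omega)] at this
end

section
/- Let D be an H-colored digraph without isolated vertices, 𝔉 a walk-preservative H-class partition of A(D), and 𝒮 a (k,l)-kernel in C_𝔉(D) with k≥3 and l≥1. If for every F∈𝒮 the subdigraph D⟨F⟩ is unilateral and has no sinks, then every kernel by paths in D⟨∪_{F∈𝒮}F⟩ is a (k−1,l+1,H)-kernel by walks in D. -/
universe u v

lemma existsPath_mono {α : Type u} {R R' : α → α → Prop} (h : ∀ a b, R a b → R' a b)
    {u v : α} (hp : ExistsPath R u v) : ExistsPath R' u v := by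
  obtain ⟨x, n, ⟨hw, hd⟩, h0, hn⟩ := hp
  exact ⟨x, n, ⟨fun i hi => h _ _ (hw i hi), hd⟩, h0, hn⟩

lemma existsPath_single {α : Type u} {R : α → α → Prop} {u v : α} (h : R u v) (hne : u ≠ v) :
    ExistsPath R u v := by
  refine ⟨fun i => if i = 0 then u else v, 1, ⟨?_, ?_⟩, by simp, by simp⟩
  · intro i hi
    interval_cases i
    simpa using h
  · intro i hi j hj heq
    interval_cases i <;> interval_cases j <;> simp_all

/-- Contraction of a walk with possible loops to a walk of length at most the number of changes. -/
lemma contract_walk {α : Type u} (R : α → α → Prop) :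
    ∀ (N : ℕ) (y : ℕ → α), (∀ i < N, R (y i) (y (i+1))) →
    ∃ z p, IsWalk R z p ∧ z 0 = y 0 ∧ z p = y N ∧
      p ≤ {j | j < N ∧ y j ≠ y (j+1)}.ncard := by
  intro N
  induction N with
  | zero => exact fun y _ => ⟨y, 0, fun i hi => by omega, rfl, rfl, Nat.zero_le _⟩
  | succ N ih =>
    intro y hy
    obtain ⟨z, p, hw, h0, hN, hle⟩ := ih y (fun i hi => hy i (by omega))
    have hfin : {j | j < N ∧ y j ≠ y (j+1)}.Finite :=
      (Set.finite_Iio N).subset (fun j hj => hj.1)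
    have hfin' : {j | j < N + 1 ∧ y j ≠ y (j+1)}.Finite :=
      (Set.finite_Iio (N+1)).subset (fun j hj => hj.1)
    have hsub : {j | j < N ∧ y j ≠ y (j+1)} ⊆ {j | j < N + 1 ∧ y j ≠ y (j+1)} :=
      fun j hj => ⟨Nat.lt_succ_of_lt hj.1, hj.2⟩
    by_cases hc : y N = y (N+1)
    · exact ⟨z, p, hw, h0, hN.trans hc,
        hle.trans (Set.ncard_le_ncard hsub hfin')⟩
    · refine ⟨fun i => if i ≤ p then z i else y (N+1), p + 1, ?_, by simp [h0], by simp, ?_⟩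
      · intro i hi
        simp only []
        by_cases h1 : i + 1 ≤ p
        · rw [if_pos (by omega : i ≤ p), if_pos h1]
          exact hw i (by omega)
        · have hip : i = p := by omega
          subst hip
          rw [if_pos (le_refl i), if_neg (by omega : ¬ i + 1 ≤ i)]
          exact hN ▸ hy N (by omega)
      · have hins : insert N {j | j < N ∧ y j ≠ y (j+1)} ⊆ {j | j < N + 1 ∧ y j ≠ y (j+1)} := by
          intro j hj
          rcases hj with rfl | hj
          · exact ⟨by omega, hc⟩
          · exact hsub hj
        have : ({j | j < N ∧ y j ≠ y (j+1)}).ncard + 1 =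
            (insert N {j | j < N ∧ y j ≠ y (j+1)}).ncard := by
          rw [Set.ncard_insert_of_notMem (fun h => absurd h.1 (by omega)) hfin]
        calc p + 1 ≤ _ + 1 := by omega
          _ = _ := this
          _ ≤ _ := Set.ncard_le_ncard hins hfin'
      
/-- Counting the changes of a monotone bounded sequence. -/
lemma count_changes (τ : ℕ → ℕ) (N m : ℕ)
    (mono : ∀ i j, i ≤ j → j < N → τ i ≤ τ j)
    (bd : ∀ i < N, τ i ≤ m) :
    {j | 1 ≤ j ∧ j < N ∧ τ (j-1) ≠ τ j}.ncard ≤ m := by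
  set S := {j | 1 ≤ j ∧ j < N ∧ τ (j-1) ≠ τ j} with hS
  have hstep : ∀ j ∈ S, τ (j-1) < τ j :=
    fun j hj => lt_of_le_of_ne (mono (j-1) j (by omega) hj.2.1) hj.2.2
  have hkey : ∀ a ∈ S, ∀ b ∈ S, a < b → τ a < τ b := by
    intro a ha b hb hab
    have hbN : b < N := hb.2.1
    have hb1 : 1 ≤ b := hb.1
    have haN : a < N := ha.2.1
    have h2 : τ a ≤ τ (b-1) := mono a (b-1) (by omega) (by omega)
    have := hstep b hb
    omega
  have hinj : Set.InjOn τ S := by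
    intro a ha b hb hab
    rcases lt_trichotomy a b with h | h | h
    · exact absurd hab (hkey a ha b hb h).ne
    · exact h
    · exact absurd hab.symm (hkey b hb a ha h).ne
  have himg : τ '' S ⊆ Set.Icc 1 m := by
    rintro t ⟨j, hj, rfl⟩
    exact ⟨by have := hstep j hj; omega, bd j hj.2.1⟩
  calc S.ncard = (τ '' S).ncard := (Set.ncard_image_of_injOn hinj).symm
    _ ≤ (Set.Icc 1 m).ncard := Set.ncard_le_ncard himg (Set.finite_Icc 1 m)
    _ = m := by rw [← Finset.coe_Icc, Set.ncard_coe_finset, Nat.card_Icc]; omega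

/-- Propagation along a walk in the class digraph, via walk-preservativity. -/
lemma chain_lemma {V : Type u} (𝔉 : Set (Set (V × V))) (hwp : WalkPreservative 𝔉) :
    ∀ (m : ℕ) (G : ℕ → Set (V × V)), IsWalk (CRel 𝔉) G m → ∀ z ∈ classVerts (G 0),
    ∃ (x : ℕ → V) (n : ℕ) (σ : ℕ → ℕ),
      x 0 = z ∧ x n ∈ classVerts (G m) ∧ (∀ i < n, (x i, x (i+1)) ∈ G (σ i)) ∧
      (∀ i j, i ≤ j → j < n → σ i ≤ σ j) ∧ (∀ i < n, σ i < m) := by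
  intro m
  induction m with
  | zero =>
    intro G _ z hz
    exact ⟨fun _ => z, 0, fun _ => 0, rfl, hz, fun i hi => by omega,
      fun i j _ hj => by omega, fun i hi => by omega⟩
  | succ m ih =>
    intro G hG z hz
    have harc : CRel 𝔉 (G 0) (G 1) := hG 0 (by omega)
    obtain ⟨w, hw, hpath⟩ := hwp (G 0) harc.1 (G 1) harc.2.1 harc.2.2 z hz
    obtain ⟨p, n₀, ⟨hpw, _⟩, hp0, hpn⟩ := hpath
    obtain ⟨x', n', σ', hx'0, hx'n, harcs', hmono', hlt'⟩ :=
      ih (fun i => G (i+1)) (fun i hi => hG (i+1) (by omega)) w hw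
    refine ⟨fun i => if i < n₀ then p i else x' (i - n₀), n₀ + n',
      fun i => if i < n₀ then 0 else σ' (i - n₀) + 1, ?_, ?_, ?_, ?_, ?_⟩ <;> beta_reduce
    · by_cases h : 0 < n₀
      · rw [if_pos h]; exact hp0
      · rw [if_neg h]
        have hn0 : n₀ = 0 := by omega
        subst hn0
        rw [Nat.sub_zero, hx'0, ← hpn, hp0]
    · rw [if_neg (by omega : ¬ n₀ + n' < n₀)]
      simpa using hx'n
    · intro i hi
      by_cases h : i < n₀
      · rw [if_pos h, if_pos h]
        by_cases h2 : i + 1 < n₀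
        · rw [if_pos h2]; exact hpw i h
        · have : i + 1 = n₀ := by omega
          rw [if_neg (by omega), this, Nat.sub_self, hx'0, ← hpn, ← this]
          exact hpw i h
      · rw [if_neg h, if_neg h, if_neg (by omega : ¬ i + 1 < n₀)]
        have h1 : i + 1 - n₀ = (i - n₀) + 1 := by omega
        rw [h1]
        exact harcs' (i - n₀) (by omega)
    · intro i j hij hj
      by_cases h : j < n₀
      · rw [if_pos (by omega : i < n₀), if_pos h]
      · rw [if_neg h]
        by_cases h2 : i < n₀
        · rw [if_pos h2]; omega
        · rw [if_neg h2]
          have := hmono' (i - n₀) (j - n₀) (by omega) (by omega)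
          omega
    · intro i hi
      by_cases h : i < n₀
      · rw [if_pos h]; omega
      · rw [if_neg h]
        have := hlt' (i - n₀) (by omega)
        omega

/-- Proposition `unilateraltheorem`. Let `D` be an `H`-colored digraph
without isolated vertices, `𝔉` a walk-preservative `H`-class partition of `A(D)`, and
`𝒮` a `(k,l)`-kernel in `C_𝔉(D)` with `k ≥ 3` and `l ≥ 1`. If for every `F ∈ 𝒮` the
subdigraph `D⟨F⟩` is unilateral and has no sinks, then every kernel by paths in
`D⟨⋃_{F ∈ 𝒮} F⟩` is a `(k-1,l+1,H)`-kernel by walks in `D`. -/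
theorem stmt7 {V : Type u} {C : Type v}
    (DA : V → V → Prop) (hloopless : ∀ a : V, ¬ DA a a)
    (HA : C → C → Prop) (ρ : V → V → C)
    (hiso : ∀ x : V, ∃ y : V, DA x y ∨ DA y x)
    (𝔉 : Set (Set (V × V)))
    (hpart : IsHClassPartition DA HA ρ 𝔉)
    (hwp : WalkPreservative 𝔉)
    (k l : ℕ) (hk : 3 ≤ k) (hl : 1 ≤ l)
    (𝒮 : Set (Set (V × V))) (hker : klKernel (CRel 𝔉) 𝔉 k l 𝒮)
    (hF : ∀ F ∈ 𝒮, UnilateralOn (memRel F) (classVerts F) ∧ NoSinksIn F) :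
    ∀ K : Set V,
      KernelByPaths (memRel (⋃₀ 𝒮)) (classVerts (⋃₀ 𝒮)) K →
      klHKernelByWalks DA HA ρ (k - 1) (l + 1) K := by
  classical
  intro K hK
  obtain ⟨hKsub, hKind, hKabs⟩ := hK
  obtain ⟨h𝒮𝔉, hCind, hCabs⟩ := hker
  -- the unique class of each arc
  obtain ⟨cls, hcls⟩ : ∃ cls : V → V → Set (V × V), ∀ a b, DA a b →
      cls a b ∈ 𝔉 ∧ (a, b) ∈ cls a b ∧ ∀ G ∈ 𝔉, (a, b) ∈ G → G = cls a b := by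
    refine ⟨fun a b => if h : DA a b then (hpart.2.1 a b h).choose else ∅, fun a b h => ?_⟩
    simp only [dif_pos h]
    obtain ⟨⟨h1, h2⟩, h3⟩ := (hpart.2.1 a b h).choose_spec
    exact ⟨h1, h2, fun G hG hab => h3 G ⟨hG, hab⟩⟩
  have hDAof : ∀ F ∈ 𝔉, ∀ a b : V, (a, b) ∈ F → DA a b :=
    fun F hF' a b hab => (hpart.1 F hF').2 (a, b) hab
  have hDU : ∀ a b : V, (a, b) ∈ ⋃₀ 𝒮 → DA a b := by
    rintro a b ⟨S, hS, hab⟩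
    exact hDAof S (h𝒮𝔉 hS) a b hab
  have hHA_of_same : ∀ a b c : V, DA a b → DA b c → ∀ F ∈ 𝔉, (a, b) ∈ F → (b, c) ∈ F →
      HA (ρ a b) (ρ b c) :=
    fun a b c h1 h2 F hF' m1 m2 => (hpart.2.2 a b c h1 h2).mpr ⟨F, hF', m1, m2⟩
  have hcls_ne : ∀ a b c : V, DA a b → DA b c → cls a b ≠ cls b c →
      ¬ HA (ρ a b) (ρ b c) := by
    intro a b c h1 h2 hne hHA
    obtain ⟨F, hF', m1, m2⟩ := (hpart.2.2 a b c h1 h2).mp hHA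
    exact hne (((hcls a b h1).2.2 F hF' m1).symm.trans ((hcls b c h2).2.2 F hF' m2))
  -- two classes of 𝒮 joined by consecutive arcs coincide
  have hSS : ∀ S ∈ 𝒮, ∀ S' ∈ 𝒮, classArc S S' → S = S' := by
    intro S hS S' hS' harc
    by_contra hne
    have hwalk : IsWalk (CRel 𝔉) (fun t => if t = 0 then S else S') 1 := by
      intro i hi
      have hi0 : i = 0 := by omega
      subst hi0
      simp only [if_pos rfl, if_neg (by omega : ¬ (0 : ℕ) + 1 = 0)]
      exact ⟨h𝒮𝔉 hS, h𝒮𝔉 hS', harc⟩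
    have := hCind S hS S' hS' hne _ 1 hwalk (by simp) (by simp)
    omega
  -- a walk inside ⋃₀ 𝒮 stays in the class of its first arc
  have hpathclass : ∀ (q : ℕ → V) (N : ℕ), IsWalk (memRel (⋃₀ 𝒮)) q N →
      ∀ S ∈ 𝒮, (q 0, q 1) ∈ S → ∀ i < N, (q i, q (i+1)) ∈ S := by
    intro q N hq S hS h0 i
    induction i with
    | zero => exact fun _ => h0
    | succ i ih =>
      intro hi
      have hprev := ih (by omega)
      obtain ⟨S', hS', hmem⟩ := hq (i+1) hi
      have hSeq : S = S' := hSS S hS S' hS' ⟨q i, q (i+1), q (i+1+1), hprev, hmem⟩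
      exact hSeq ▸ hmem
  have hcvU : ∀ S ∈ 𝒮, ∀ a, a ∈ classVerts S → a ∈ classVerts (⋃₀ 𝒮) := by
    rintro S hS a ⟨b, hb | hb⟩
    · exact ⟨b, Or.inl ⟨S, hS, hb⟩⟩
    · exact ⟨b, Or.inr ⟨S, hS, hb⟩⟩
  have hUcv : ∀ a, a ∈ classVerts (⋃₀ 𝒮) → ∃ S ∈ 𝒮, a ∈ classVerts S := by
    rintro a ⟨b, hb | hb⟩
    · obtain ⟨S, hS, hab⟩ := hb; exact ⟨S, hS, b, Or.inl hab⟩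
    · obtain ⟨S, hS, hab⟩ := hb; exact ⟨S, hS, b, Or.inr hab⟩
  have hdistinct : ∀ u ∈ K, ∀ v ∈ K, u ≠ v → ∀ S ∈ 𝒮,
      u ∈ classVerts S → v ∈ classVerts S → False := by
    intro u hu v hv huv S hS hucv hvcv
    have hmono : ∀ a b : V, memRel S a b → memRel (⋃₀ 𝒮) a b := fun a b h => ⟨S, hS, h⟩
    rcases (hF S hS).1 u hucv v hvcv with h | h
    · exact hKind u hu v hv huv (existsPath_mono hmono h)
    · exact hKind v hv u hu (Ne.symm huv) (existsPath_mono hmono h)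
  -- every vertex of K has an in-arc in some class of 𝒮 containing it
  have hKin : ∀ u ∈ K, ∃ S ∈ 𝒮, u ∈ classVerts S ∧ ∃ p, (p, u) ∈ S := by
    intro u hu
    obtain ⟨S0, hS0, hucv0⟩ := hUcv u (hKsub hu)
    obtain ⟨b, hb | hb⟩ := hucv0
    · -- out-arc (u,b)
      have hDAub : DA u b := hDAof S0 (h𝒮𝔉 hS0) u b hb
      have hub : u ≠ b := fun h => hloopless u (h ▸ hDAub)
      have hbK : b ∉ K := fun hbK =>
        hKind u hu b hbK hub (existsPath_single ⟨S0, hS0, hb⟩ hub)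
      have hbU : b ∈ classVerts (⋃₀ 𝒮) := hcvU S0 hS0 b ⟨u, Or.inr hb⟩
      obtain ⟨w, hwK, q, N, ⟨hqw, _⟩, hq0, hqN⟩ := hKabs b hbU hbK
      have hNpos : 0 < N := by
        rcases Nat.eq_zero_or_pos N with h0 | h
        · exfalso
          apply hbK
          have hbw : b = w := by rw [← hq0, ← hqN, h0]
          exact hbw ▸ hwK
        · exact h
      obtain ⟨S1, hS1, hq01⟩ := hqw 0 hNpos
      have hS1S0 : S0 = S1 := hSS S0 hS0 S1 hS1 ⟨u, b, q 1, hb, hq0 ▸ hq01⟩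
      have hqS0 : ∀ i < N, (q i, q (i+1)) ∈ S0 :=
        hpathclass q N hqw S0 hS0 (hS1S0 ▸ hq01)
      have hlast : (q (N-1), q N) ∈ S0 := by
        have := hqS0 (N-1) (by omega)
        rwa [(by omega : N - 1 + 1 = N)] at this
      have hwcv : w ∈ classVerts S0 := ⟨q (N-1), Or.inr (hqN ▸ hlast)⟩
      have hwu : w = u := by
        by_contra hne
        exact hdistinct u hu w hwK (fun h => hne h.symm) S0 hS0 ⟨b, Or.inl hb⟩ hwcv
      refine ⟨S0, hS0, ⟨b, Or.inl hb⟩, q (N-1), ?_⟩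
      rw [hqN, hwu] at hlast
      exact hlast
    · exact ⟨S0, hS0, ⟨b, Or.inr hb⟩, b, hb⟩
  constructor
  · -- (k-1, H)-independence by walks
    intro u hu v hv huv x n hw hx0 hxn
    have hn : 0 < n := by
      rcases Nat.eq_zero_or_pos n with h0 | h
      · exfalso; apply huv; rw [← hx0, ← hxn, h0]
      · exact h
    obtain ⟨Su, hSu, hucv, pu, hpu⟩ := hKin u hu
    obtain ⟨Sv, hSv, hvcv⟩ := hUcv v (hKsub hv)
    obtain ⟨zv, hzv⟩ := (hF Sv hSv).2 v hvcv
    have hSune : Su ≠ Sv := fun h => hdistinct u hu v hv huv Sv hSv (h ▸ hucv) hvcv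
    obtain ⟨Y, hYdef⟩ : ∃ Y : ℕ → Set (V × V),
        ∀ j, Y j = if j = 0 then Su else if j ≤ n then cls (x (j-1)) (x j) else Sv :=
      ⟨_, fun j => rfl⟩
    have hYmid : ∀ j, 1 ≤ j → j ≤ n → Y j = cls (x (j-1)) (x j) := by
      intro j h1 h2
      rw [hYdef j, if_neg (by omega), if_pos h2]
    have hYwalk : ∀ j < n + 1, CRel 𝔉 (Y j) (Y (j+1)) := by
      intro j hj
      rcases Nat.eq_zero_or_pos j with rfl | hjpos
      · have h01 : DA (x 0) (x 1) := hw 0 hn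
        rw [hYdef 0, if_pos rfl, hYmid 1 le_rfl hn, (by omega : (1:ℕ) - 1 = 0)]
        exact ⟨h𝒮𝔉 hSu, (hcls (x 0) (x 1) h01).1, pu, u, x 1, hpu,
          hx0 ▸ (hcls (x 0) (x 1) h01).2.1⟩
      · by_cases hjn : j < n
        · have hd1 : DA (x (j-1)) (x j) := by
            have := hw (j-1) (by omega)
            rwa [(by omega : j - 1 + 1 = j)] at this
          have hd2 : DA (x j) (x (j+1)) := hw j hjn
          rw [hYmid j hjpos (by omega), hYmid (j+1) (by omega) (by omega),
            (by omega : j + 1 - 1 = j)]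
          exact ⟨(hcls _ _ hd1).1, (hcls _ _ hd2).1, x (j-1), x j, x (j+1),
            (hcls _ _ hd1).2.1, (hcls _ _ hd2).2.1⟩
        · have hjn' : j = n := by omega
          subst hjn'
          have hd1 : DA (x (j-1)) (x j) := by
            have := hw (j-1) (by omega)
            rwa [(by omega : j - 1 + 1 = j)] at this
          rw [hYmid j hjpos le_rfl, hYdef (j+1), if_neg (by omega), if_neg (by omega)]
          refine ⟨(hcls _ _ hd1).1, h𝒮𝔉 hSv, x (j-1), x j, zv, (hcls _ _ hd1).2.1, ?_⟩
          rw [hxn]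
          exact hzv
    obtain ⟨zc, pc, hzcw, hzc0, hzcp, hpcle⟩ := contract_walk (CRel 𝔉) (n+1) Y hYwalk
    have hz0Su : zc 0 = Su := by rw [hzc0, hYdef 0, if_pos rfl]
    have hzpSv : zc pc = Sv := by
      rw [hzcp, hYdef (n+1), if_neg (by omega), if_neg (by omega)]
    have hkp : k ≤ pc := hCind Su hSu Sv hSv hSune zc pc hzcw hz0Su hzpSv
    have hOfin : (obstructions HA ρ x n).Finite :=
      (Set.finite_Iio n).subset (fun j hj => hj.2.1)
    have hObSub : {j | j < n + 1 ∧ Y j ≠ Y (j+1)} ⊆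
        insert 0 (insert n (obstructions HA ρ x n)) := by
      intro j hj
      obtain ⟨hjlt, hjne⟩ := hj
      simp only [Set.mem_insert_iff]
      by_cases hj0 : j = 0
      · exact Or.inl hj0
      by_cases hjn : j = n
      · exact Or.inr (Or.inl hjn)
      right; right
      have h1 : 1 ≤ j := by omega
      have h2 : j < n := by omega
      have hd1 : DA (x (j-1)) (x j) := by
        have := hw (j-1) (by omega)
        rwa [(by omega : j - 1 + 1 = j)] at this
      have hd2 : DA (x j) (x (j+1)) := hw j h2
      refine ⟨h1, h2, ?_⟩
      refine hcls_ne (x (j-1)) (x j) (x (j+1)) hd1 hd2 ?_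
      have e2 : Y (j+1) = cls (x j) (x (j+1)) := by
        rw [hYmid (j+1) (by omega) (by omega), (by omega : j + 1 - 1 = j)]
      rw [← hYmid j h1 (by omega), ← e2]
      exact hjne
    have hball : {j | j < n + 1 ∧ Y j ≠ Y (j+1)}.ncard ≤ (obstructions HA ρ x n).ncard + 2 := by
      have hf2 : (insert 0 (insert n (obstructions HA ρ x n))).Finite := (hOfin.insert n).insert 0
      have hc1 := Set.ncard_le_ncard hObSub hf2
      have hc2 := Set.ncard_insert_le 0 (insert n (obstructions HA ρ x n))
      have hc3 := Set.ncard_insert_le n (obstructions HA ρ x n)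
      omega
    have hLeq : hLength HA ρ x n = (obstructions HA ρ x n).ncard + 1 := rfl
    omega
  · -- (l+1, H)-absorbency by walks
    intro u huK
    by_cases huU : u ∈ classVerts (⋃₀ 𝒮)
    · obtain ⟨w, hwK, q, N, ⟨hqw, _⟩, hq0, hqN⟩ := hKabs u huU huK
      refine ⟨w, hwK, q, N, fun i hi => hDU _ _ (hqw i hi), hq0, hqN, ?_⟩
      have hOempty : obstructions HA ρ q N = ∅ := by
        ext j
        simp only [obstructions, Set.mem_setOf_eq, Set.mem_empty_iff_false, iff_false]
        rintro ⟨hj1, hjN, hnHA⟩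
        obtain ⟨S1, hS1, h01⟩ := hqw 0 (by omega)
        have hall := hpathclass q N hqw S1 hS1 h01
        have a1 : (q (j-1), q j) ∈ S1 := by
          have := hall (j-1) (by omega)
          rwa [(by omega : j - 1 + 1 = j)] at this
        have a2 : (q j, q (j+1)) ∈ S1 := hall j hjN
        have hd1 : DA (q (j-1)) (q j) := hDAof S1 (h𝒮𝔉 hS1) _ _ a1
        have hd2 : DA (q j) (q (j+1)) := hDAof S1 (h𝒮𝔉 hS1) _ _ a2
        exact hnHA (hHA_of_same _ _ _ hd1 hd2 S1 (h𝒮𝔉 hS1) a1 a2)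
      have hLeq : hLength HA ρ q N = (obstructions HA ρ q N).ncard + 1 := rfl
      rw [hLeq, hOempty]
      simp
    · obtain ⟨y0, hy0⟩ := hiso u
      obtain ⟨F0, hF0𝔉, hucvF0⟩ : ∃ F0 ∈ 𝔉, u ∈ classVerts F0 := by
        rcases hy0 with h | h
        · exact ⟨cls u y0, (hcls u y0 h).1, y0, Or.inl (hcls u y0 h).2.1⟩
        · exact ⟨cls y0 u, (hcls y0 u h).1, y0, Or.inr (hcls y0 u h).2.1⟩
      have hF0not : F0 ∉ 𝒮 := fun h => huU (hcvU F0 h u hucvF0)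
      obtain ⟨T, hT, G, m, hGwalk, hG0, hGm, hml⟩ := hCabs F0 hF0𝔉 hF0not
      have hm1 : 1 ≤ m := by
        rcases Nat.eq_zero_or_pos m with h0 | h
        · exfalso
          apply hF0not
          have : F0 = T := by rw [← hG0, ← hGm, h0]
          exact this ▸ hT
        · exact h
      obtain ⟨x, n, σ, hx0, hxn, harcs, hmono, hσlt⟩ :=
        chain_lemma 𝔉 hwp m G hGwalk u (by rw [hG0]; exact hucvF0)
      have hG𝔉 : ∀ i ≤ m, G i ∈ 𝔉 := by
        intro i hi
        rcases Nat.lt_or_ge i m with h | h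
        · exact (hGwalk i h).1
        · have him : i = m := by omega
          subst him
          have := hGwalk (i-1) (by omega)
          rw [(by omega : i - 1 + 1 = i)] at this
          exact this.2.1
      have hDAx : IsWalk DA x n := fun i hi =>
        hDAof _ (hG𝔉 (σ i) (by have := hσlt i hi; omega)) _ _ (harcs i hi)
      have hy'cv : x n ∈ classVerts (⋃₀ 𝒮) :=
        hcvU T hT (x n) (by rw [← hGm]; exact hxn)
      by_cases hy'K : x n ∈ K
      · refine ⟨x n, hy'K, x, n, hDAx, hx0, rfl, ?_⟩
        have hOsub : obstructions HA ρ x n ⊆ {j | 1 ≤ j ∧ j < n ∧ σ (j-1) ≠ σ j} := by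
          rintro j ⟨h1, h2, hnHA⟩
          refine ⟨h1, h2, fun hσeq => hnHA ?_⟩
          have a1 : (x (j-1), x j) ∈ G (σ (j-1)) := by
            have := harcs (j-1) (by omega)
            rwa [(by omega : j - 1 + 1 = j)] at this
          have a2 := harcs j h2
          rw [hσeq] at a1
          have hd1 : DA (x (j-1)) (x j) := by
            have := hDAx (j-1) (by omega)
            rwa [(by omega : j - 1 + 1 = j)] at this
          exact hHA_of_same _ _ _ hd1 (hDAx j h2) _
            (hG𝔉 (σ j) (by have := hσlt j h2; omega)) a1 a2
        have hcount := count_changes σ n (m-1) hmono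
          (fun i hi => by have := hσlt i hi; omega)
        have hfinset : {j | 1 ≤ j ∧ j < n ∧ σ (j-1) ≠ σ j}.Finite :=
          (Set.finite_Iio n).subset (fun j hj => hj.2.1)
        have hOle := Set.ncard_le_ncard hOsub hfinset
        have hLeq : hLength HA ρ x n = (obstructions HA ρ x n).ncard + 1 := rfl
        omega
      · obtain ⟨w, hwK, q, N, ⟨hqw, _⟩, hq0, hqN⟩ := hKabs (x n) hy'cv hy'K
        have hNpos : 0 < N := by
          rcases Nat.eq_zero_or_pos N with h0 | h
          · exfalso
            apply hy'K
            have hxw : x n = w := by rw [← hq0, ← hqN, h0]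
            exact hxw ▸ hwK
          · exact h
        obtain ⟨S', hS', h01⟩ := hqw 0 hNpos
        have hqS' : ∀ i < N, (q i, q (i+1)) ∈ S' := hpathclass q N hqw S' hS' h01
        obtain ⟨X, hXdef⟩ : ∃ X : ℕ → V, ∀ i, X i = if i < n then x i else q (i - n) :=
          ⟨_, fun i => rfl⟩
        obtain ⟨τ, hτdef⟩ : ∃ τ : ℕ → ℕ, ∀ i, τ i = if i < n then σ i else m :=
          ⟨_, fun i => rfl⟩
        have hXa : ∀ i < n + N, (X i, X (i+1)) ∈ (if i < n then G (σ i) else S') := by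
          intro i hi
          by_cases h : i < n
          · rw [if_pos h, hXdef i, if_pos h, hXdef (i+1)]
            by_cases h2 : i + 1 < n
            · rw [if_pos h2]; exact harcs i h
            · rw [if_neg h2]
              have hin : i + 1 = n := by omega
              rw [hin, Nat.sub_self, hq0, ← hin]
              exact harcs i h
          · rw [if_neg h, hXdef i, if_neg h, hXdef (i+1), if_neg (by omega : ¬ i + 1 < n),
              (by omega : i + 1 - n = (i - n) + 1)]
            exact hqS' (i - n) (by omega)
        have hXDA : IsWalk DA X (n + N) := by
          intro i hi
          have := hXa i hi
          by_cases h : i < n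
          · rw [if_pos h] at this
            exact hDAof _ (hG𝔉 (σ i) (by have := hσlt i h; omega)) _ _ this
          · rw [if_neg h] at this
            exact hDAof _ (h𝒮𝔉 hS') _ _ this
        have hX0 : X 0 = u := by
          rw [hXdef 0]
          by_cases h : 0 < n
          · rw [if_pos h]; exact hx0
          · rw [if_neg h, Nat.zero_sub, hq0, (by omega : n = 0)]
            exact hx0
        have hXend : X (n + N) = w := by
          rw [hXdef (n + N), if_neg (by omega : ¬ n + N < n), Nat.add_sub_cancel_left]
          exact hqN
        refine ⟨w, hwK, X, n + N, hXDA, hX0, hXend, ?_⟩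
        have hτmono : ∀ i j, i ≤ j → j < n + N → τ i ≤ τ j := by
          intro i j hij hj
          rw [hτdef i, hτdef j]
          by_cases h : j < n
          · rw [if_pos (by omega : i < n), if_pos h]
            exact hmono i j hij h
          · rw [if_neg h]
            by_cases h2 : i < n
            · rw [if_pos h2]; have := hσlt i h2; omega
            · rw [if_neg h2]
        have hτbd : ∀ i < n + N, τ i ≤ m := by
          intro i hi
          rw [hτdef i]
          by_cases h : i < n
          · rw [if_pos h]; have := hσlt i h; omega
          · rw [if_neg h]
        have hOsub : obstructions HA ρ X (n+N) ⊆
            {j | 1 ≤ j ∧ j < n + N ∧ τ (j-1) ≠ τ j} := by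
          rintro j ⟨h1, h2, hnHA⟩
          refine ⟨h1, h2, fun hτeq => hnHA ?_⟩
          have a1 := hXa (j-1) (by omega)
          rw [(by omega : j - 1 + 1 = j)] at a1
          have a2 := hXa j h2
          have hd1 : DA (X (j-1)) (X j) := by
            have := hXDA (j-1) (by omega)
            rwa [(by omega : j - 1 + 1 = j)] at this
          have hd2 : DA (X j) (X (j+1)) := hXDA j h2
          rw [hτdef (j-1), hτdef j] at hτeq
          by_cases h : j - 1 < n
          · rw [if_pos h] at a1 hτeq
            by_cases hjn : j < n
            · rw [if_pos hjn] at a2 hτeq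
              rw [hτeq] at a1
              exact hHA_of_same _ _ _ hd1 hd2 _
                (hG𝔉 (σ j) (by have := hσlt j hjn; omega)) a1 a2
            · exfalso
              rw [if_neg hjn] at hτeq
              have := hσlt (j-1) h
              omega
          · rw [if_neg h] at a1 hτeq
            rw [if_neg (by omega : ¬ j < n)] at a2 hτeq
            exact hHA_of_same _ _ _ hd1 hd2 S' (h𝒮𝔉 hS') a1 a2
        have hcount := count_changes τ (n+N) m hτmono hτbd
        have hfinset : {j | 1 ≤ j ∧ j < n + N ∧ τ (j-1) ≠ τ j}.Finite :=
          (Set.finite_Iio (n+N)).subset (fun j hj => hj.2.1)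
        have hOle := Set.ncard_le_ncard hOsub hfinset
        have hLeq : hLength HA ρ X (n+N) = (obstructions HA ρ X (n+N)).ncard + 1 := rfl
        omega
end

section
/- Let D be an H-colored digraph, 𝔉 an H-class partition of A(D), and 𝒮 an independent set in C_𝔉(D). Then D⟨∪_{F∈𝒮}F⟩ is an H-subdigraph of D, i.e., for every two consecutive arcs (u,v) and (v,w) of D⟨∪_{F∈𝒮}F⟩ one has (ρ(u,v),ρ(v,w))∈A(H). -/
universe u v

/-- Lemma `c1.l1`. Let `D` be an `H`-colored digraph, `𝔉` an
`H`-class partition of `A(D)`, and `𝒮` an independent set in `C_𝔉(D)`. Then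
`D⟨⋃_{F ∈ 𝒮} F⟩` is an `H`-subdigraph of `D`: for every two consecutive arcs `(u,v)`
and `(v,w)` of `D⟨⋃_{F ∈ 𝒮} F⟩` one has `(ρ(u,v), ρ(v,w)) ∈ A(H)`. -/
theorem stmt16 {V : Type u} {C : Type v}
    (DA : V → V → Prop) (hloopless : ∀ a : V, ¬ DA a a)
    (HA : C → C → Prop) (ρ : V → V → C)
    (𝔉 : Set (Set (V × V)))
    (hpart : IsHClassPartition DA HA ρ 𝔉)
    (𝒮 : Set (Set (V × V)))
    (hind : IndependentOn (CRel 𝔉) 𝔉 𝒮) :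
    ∀ u v w : V, (u, v) ∈ ⋃₀ 𝒮 → (v, w) ∈ ⋃₀ 𝒮 → HA (ρ u v) (ρ v w) := by
  intro u v w hu hv
  obtain ⟨F, hF𝒮, hFuv⟩ := hu
  obtain ⟨G, hG𝒮, hGvw⟩ := hv
  have hF𝔉 := hind.1 hF𝒮
  have hG𝔉 := hind.1 hG𝒮
  have hDuv : DA u v := (hpart.1 F hF𝔉).2 _ hFuv
  have hDvw : DA v w := (hpart.1 G hG𝔉).2 _ hGvw
  have hFG : F = G := by
    by_contra hne
    exact hind.2 F hF𝒮 G hG𝒮 hne ⟨hF𝔉, hG𝔉, u, v, w, hFuv, hGvw⟩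
  exact (hpart.2.2 u v w hDuv hDvw).2 ⟨F, hF𝔉, hFuv, hFG ▸ hGvw⟩
end

section
/- Let D be an H-colored digraph and 𝔉 an H-class partition of A(D). If D is strongly connected, then the H-class digraph C_𝔉(D) is strongly connected. -/
universe u v

/-- Every walk contains a path between its endpoints. -/
lemma walk_to_path_aux {α : Type u} (R : α → α → Prop) :
    ∀ n (x : ℕ → α), IsWalk R x n → ExistsPath R (x 0) (x n) := by
  intro n
  induction n using Nat.strong_induction_on with
  | _ n ih =>
    intro x hw
    by_cases hinj : ∀ i ≤ n, ∀ j ≤ n, x i = x j → i = j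
    · exact ⟨x, n, ⟨hw, hinj⟩, rfl, rfl⟩
    · push_neg at hinj
      obtain ⟨i, hi, j, hj, heq, hne⟩ := hinj
      -- wlog i < j
      rcases lt_or_gt_of_ne hne with hlt | hlt
      case _ =>
        exact walk_splice R n ih x hw i j hi hj heq hlt
      case _ =>
        exact walk_splice R n ih x hw j i hj hi heq.symm hlt
where
  walk_splice (R : α → α → Prop) (n : ℕ)
      (ih : ∀ m < n, ∀ x : ℕ → α, IsWalk R x m → ExistsPath R (x 0) (x m))
      (x : ℕ → α) (hw : IsWalk R x n) (i j : ℕ) (hi : i ≤ n) (hj : j ≤ n)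
      (heq : x i = x j) (hlt : i < j) : ExistsPath R (x 0) (x n) := by
    set d := j - i with hd
    set y : ℕ → α := fun k => if k ≤ i then x k else x (k + d) with hy
    have hdpos : 1 ≤ d := by omega
    have hwalk : IsWalk R y (n - d) := by
      intro k hk
      by_cases h1 : k + 1 ≤ i
      · have e1 : y k = x k := by simp [hy]; intro h; omega
        have e2 : y (k + 1) = x (k + 1) := by simp [hy, h1]
        rw [e1, e2]; exact hw k (by omega)
      · by_cases h2 : k ≤ i
        · have hki : k = i := by omega
          have e1 : y k = x j := by simp [hy, h2, hki, heq]
          have e2 : y (k + 1) = x (j + 1) := by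
            have : k + 1 + d = j + 1 := by omega
            simp [hy, h1, this]
          rw [e1, e2]; exact hw j (by omega)
        · have e1 : y k = x (k + d) := by simp [hy, h2]
          have e2 : y (k + 1) = x (k + 1 + d) := by
            simp [hy]; intro h; omega
          rw [e1, e2]
          have : k + d + 1 = k + 1 + d := by omega
          rw [← this]
          exact hw (k + d) (by omega)
    have h0 : y 0 = x 0 := by simp [hy]
    have hend : y (n - d) = x n := by
      by_cases h : n - d ≤ i
      · have h1 : n - d = i := by omega
        have h2 : j = n := by omega
        simp [hy, h, h1, heq, h2]
      · have : n - d + d = n := by omega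
        simp [hy, h, this]
    have := ih (n - d) (by omega) y hwalk
    rw [h0, hend] at this
    exact this

/-- Lemma `c1.l2`. Let `D` be an `H`-colored digraph and `𝔉` an
`H`-class partition of `A(D)`. If `D` is strongly connected, then the `H`-class digraph
`C_𝔉(D)` is strongly connected. -/
theorem stmt17 {V : Type u} {C : Type v}
    (DA : V → V → Prop) (hloopless : ∀ a : V, ¬ DA a a)
    (HA : C → C → Prop) (ρ : V → V → C)
    (𝔉 : Set (Set (V × V)))
    (hpart : IsHClassPartition DA HA ρ 𝔉)
    (hsc : StronglyConnectedOn DA (Set.univ : Set V)) :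
    StronglyConnectedOn (CRel 𝔉) 𝔉 := by
  classical
  obtain ⟨hclasses, huniq, -⟩ := hpart
  intro F hF G hG
  obtain ⟨hFne, hFarcs⟩ := hclasses F hF
  obtain ⟨⟨u, v⟩, huv⟩ := hFne
  obtain ⟨hGne, hGarcs⟩ := hclasses G hG
  obtain ⟨⟨w, z'⟩, hwz⟩ := hGne
  obtain ⟨x, m, ⟨hxw, -⟩, hx0, hxm⟩ := hsc v trivial w trivial
  set zz : ℕ → V := fun i => if i = 0 then u else if i ≤ m + 1 then x (i - 1) else z'
    with hzz
  have hDAzz : ∀ i < m + 2, DA (zz i) (zz (i + 1)) := by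
    intro i hi
    rcases Nat.eq_zero_or_pos i with h0 | hpos
    · subst h0
      have e0 : zz 0 = u := by simp [hzz]
      have e1 : zz 1 = v := by simp [hzz, hx0]
      rw [e0, e1]
      exact hFarcs (u, v) huv
    · by_cases hlast : i = m + 1
      · subst hlast
        have e1 : zz (m + 1) = w := by
          simp only [hzz]
          rw [if_neg (by omega), if_pos (by omega)]
          simpa using hxm
        have e2 : zz (m + 1 + 1) = z' := by
          simp only [hzz]
          rw [if_neg (by omega), if_neg (by omega)]
        rw [e1, e2]
        exact hGarcs (w, z') hwz
      · have hile : i ≤ m := by omega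
        have e1 : zz i = x (i - 1) := by
          simp only [hzz]
          rw [if_neg (by omega), if_pos (by omega)]
        have e2 : zz (i + 1) = x i := by
          simp only [hzz]
          rw [if_neg (by omega), if_pos (by omega)]
          simp
        rw [e1, e2]
        have : i - 1 + 1 = i := by omega
        rw [← this]
        exact hxw (i - 1) (by omega)
  set cls : ℕ → Set (V × V) :=
    fun i => if h : DA (zz i) (zz (i + 1)) then (huniq _ _ h).choose else G
    with hcls
  have hclsMem : ∀ i < m + 2, cls i ∈ 𝔉 ∧ (zz i, zz (i + 1)) ∈ cls i := by
    intro i hi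
    have hda := hDAzz i hi
    simp only [hcls, dif_pos hda]
    exact (huniq _ _ hda).choose_spec.1
  have hclsSpec : ∀ i, ∀ K ∈ 𝔉, (zz i, zz (i + 1)) ∈ K → cls i = K := by
    intro i K hK hmem
    have hda : DA (zz i) (zz (i + 1)) := (hclasses K hK).2 _ hmem
    simp only [hcls, dif_pos hda]
    exact ((huniq _ _ hda).choose_spec.2 K ⟨hK, hmem⟩).symm
  have hwalk : IsWalk (CRel 𝔉) cls (m + 1) := by
    intro i hi
    obtain ⟨h1, h1'⟩ := hclsMem i (by omega)
    obtain ⟨h2, h2'⟩ := hclsMem (i + 1) (by omega)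
    exact ⟨h1, h2, zz i, zz (i + 1), zz (i + 2), h1', h2'⟩
  have e0 : cls 0 = F := by
    apply hclsSpec 0 F hF
    have e0 : zz 0 = u := by simp [hzz]
    have e1 : zz 1 = v := by simp [hzz, hx0]
    rw [e0, e1]; exact huv
  have eN : cls (m + 1) = G := by
    apply hclsSpec (m + 1) G hG
    have e1 : zz (m + 1) = w := by
      simp only [hzz]
      rw [if_neg (by omega), if_pos (by omega)]
      simpa using hxm
    have e2 : zz (m + 2) = z' := by
      simp only [hzz]
      rw [if_neg (by omega), if_neg (by omega)]
    rw [e1, e2]; exact hwz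
  have := walk_to_path_aux (CRel 𝔉) (m + 1) cls hwalk
  rw [e0, eN] at this
  exact this
end

section
/- Let D be an H-colored digraph and 𝔉 an H-class partition of A(D) such that D⟨F⟩ is strongly connected for every F∈𝔉. Then: (a) 𝔉 is walk-preservative; (b) C_𝔉(D) is symmetric, i.e., whenever (F,G) is an arc of C_𝔉(D), so is (G,F); (c) if 𝒮 is an independent set in C_𝔉(D) and F_1,F_2∈𝒮 are distinct, then V(D⟨F_1⟩)∩V(D⟨F_2⟩)=∅. -/
universe u v

lemma path_ends {α : Type u} {R : α → α → Prop} {u v : α}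
    (h : ExistsPath R u v) (hne : u ≠ v) :
    (∃ a, R u a) ∧ (∃ a, R a v) := by
  obtain ⟨x, n, ⟨hw, _⟩, h0, hn⟩ := h
  have hn0 : n ≠ 0 := by rintro rfl; exact hne (h0 ▸ hn ▸ rfl)
  obtain ⟨m, rfl⟩ := Nat.exists_eq_succ_of_ne_zero hn0
  constructor
  · refine ⟨x 1, ?_⟩; rw [← h0]; exact hw 0 (Nat.succ_pos m)
  · refine ⟨x m, ?_⟩; rw [← hn]; exact hw m (Nat.lt_succ_self m)

lemma in_out {V : Type u} {F : Set (V × V)}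
    (hsc : StronglyConnectedOn (memRel F) (classVerts F))
    (hlo : ∀ p ∈ F, p.1 ≠ p.2) {z : V} (hz : z ∈ classVerts F) :
    (∃ a, (a, z) ∈ F) ∧ (∃ b, (z, b) ∈ F) := by
  obtain ⟨b, hb | hb⟩ := hz
  · have hbV : b ∈ classVerts F := ⟨z, Or.inr hb⟩
    have hzV : z ∈ classVerts F := ⟨b, Or.inl hb⟩
    have hne : b ≠ z := (hlo _ hb).symm
    exact ⟨(path_ends (hsc b hbV z hzV) hne).2, ⟨b, hb⟩⟩
  · have hbV : b ∈ classVerts F := ⟨z, Or.inl hb⟩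
    have hzV : z ∈ classVerts F := ⟨b, Or.inr hb⟩
    have hne : z ≠ b := fun h => hlo _ hb h.symm
    exact ⟨⟨b, hb⟩, (path_ends (hsc z hzV b hbV) hne).1⟩

/-- Lemma `lemmastronglyconnected`. Let `D` be an `H`-colored digraph
and `𝔉` an `H`-class partition of `A(D)` such that `D⟨F⟩` is strongly connected for
every `F ∈ 𝔉`. Then (a) `𝔉` is walk-preservative; (b) `C_𝔉(D)` is symmetric;
(c) if `𝒮` is an independent set in `C_𝔉(D)` and `F₁, F₂ ∈ 𝒮` are distinct, then
`V(D⟨F₁⟩) ∩ V(D⟨F₂⟩) = ∅`. -/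
theorem stmt18 {V : Type u} {C : Type v}
    (DA : V → V → Prop) (hloopless : ∀ a : V, ¬ DA a a)
    (HA : C → C → Prop) (ρ : V → V → C)
    (𝔉 : Set (Set (V × V)))
    (hpart : IsHClassPartition DA HA ρ 𝔉)
    (hstrong : ∀ F ∈ 𝔉, StronglyConnectedOn (memRel F) (classVerts F)) :
    WalkPreservative 𝔉 ∧
    (∀ F G : Set (V × V), CRel 𝔉 F G → CRel 𝔉 G F) ∧
    (∀ 𝒮 : Set (Set (V × V)), IndependentOn (CRel 𝔉) 𝔉 𝒮 →
      ∀ F₁ ∈ 𝒮, ∀ F₂ ∈ 𝒮, F₁ ≠ F₂ → classVerts F₁ ∩ classVerts F₂ = ∅) := by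
  have hlo : ∀ F ∈ 𝔉, ∀ p ∈ F, p.1 ≠ p.2 := by
    intro F hF p hp h
    have := (hpart.1 F hF).2 p hp
    rw [h] at this
    exact hloopless _ this
  refine ⟨?_, ?_, ?_⟩
  · intro F hF G hG ⟨u, v, w, huv, hvw⟩ z hz
    exact ⟨v, ⟨w, Or.inl hvw⟩, hstrong F hF z hz v ⟨u, Or.inr huv⟩⟩
  · rintro F G ⟨hF, hG, u, v, w, huv, hvw⟩
    obtain ⟨a, ha⟩ := (in_out (hstrong G hG) (hlo G hG) ⟨w, Or.inl hvw⟩).1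
    obtain ⟨b, hb⟩ := (in_out (hstrong F hF) (hlo F hF) ⟨u, Or.inr huv⟩).2
    exact ⟨hG, hF, a, v, b, ha, hb⟩
  · rintro 𝒮 ⟨hsub, hind⟩ F₁ h1 F₂ h2 hne
    by_contra hcon
    obtain ⟨z, hz1, hz2⟩ := Set.nonempty_iff_ne_empty.mpr hcon
    have hF1 := hsub h1
    have hF2 := hsub h2
    obtain ⟨a, ha⟩ := (in_out (hstrong F₁ hF1) (hlo F₁ hF1) hz1).1
    obtain ⟨b, hb⟩ := (in_out (hstrong F₂ hF2) (hlo F₂ hF2) hz2).2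
    exact hind F₁ h1 F₂ h2 hne ⟨hF1, hF2, a, z, b, ha, hb⟩
end
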